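/- The Dullin–Matveev Hamiltonian H₄ = J₁² + J₂² + (1 + x₃/(x₃+e) − (x₃²−a²)/(4(x₃+e)²))J₃² + c·x₁/(x₃+e)^{1/2} + d/(x₃+e) Poisson-commutes with the corresponding cubic integral K₄ (formula (K) with α = 1/2, n(x₃) = c(x₃+e)^{1/2} and f,g,ℓ determined by (fgml)), on the set x₃ > −e, x₁²+x₂²+x₃² = a², x₁J₁+x₂J₂+x₃J₃ = 0. -/

import Mathlib

/-!
On the half-line `x₃ > −e` every profile function is explicit in `r = √(x₃+e)`: `n = c r`,
`m = −c/r`, `ℓ = −c/(2r)`, `g = d/(c² r²)` and `f = Φ − 3/4`, where `Φ` is the coefficient of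
`J₃²` in `H`. Written in Lie–Poisson form `J·(∂_J H × ∂_J K) + x·(∂_J H × ∂_x K + ∂_x H × ∂_J K)`,
the bracket `{H, K}` is then a rational function of `r` and the coordinates, namely
`−c(2r²J₂ + x₂J₃)/(2r³) · (x·J) + cJ₂J₃/(2r³) · (|x|² − a²)`.
It is a combination of the two Casimirs and so vanishes on their common level set.
-/

open scoped BigOperators

/-- Index of `x_i` (i = 0,1,2) in phase space `ℝ⁶ = Fin 6 → ℝ`. -/
def xIdx (i : Fin 3) : Fin 6 := ⟨i.1, by omega⟩
/-- Index of `J_i` (i = 0,1,2) in phase space. -/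
def jIdx (i : Fin 3) : Fin 6 := ⟨i.1 + 3, by omega⟩

/-- Partial derivative of `F` in the `i`-th coordinate direction. -/
noncomputable def pd (i : Fin 6) (F : (Fin 6 → ℝ) → ℝ) (z : Fin 6 → ℝ) : ℝ :=
  fderiv ℝ F z (Pi.single i 1)

/-- Levi-Civita symbol on `Fin 3`. -/
def eps (i j k : Fin 3) : ℝ :=
  if (i,j,k) = (0,1,2) ∨ (i,j,k) = (1,2,0) ∨ (i,j,k) = (2,0,1) then 1
  else if (i,j,k) = (1,0,2) ∨ (i,j,k) = (2,1,0) ∨ (i,j,k) = (0,2,1) then -1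
  else 0

/-- The e(3) Poisson bracket on smooth functions of `(x, J) ∈ ℝ⁶`, generated by
`{J_i,J_j} = ε_{ijk} J_k`, `{J_i,x_j} = ε_{ijk} x_k`, `{x_i,x_j} = 0`. -/
noncomputable def e3Bracket (F G : (Fin 6 → ℝ) → ℝ) (z : Fin 6 → ℝ) : ℝ :=
  ∑ i : Fin 3, ∑ j : Fin 3, ∑ k : Fin 3, eps i j k *
    ( z (jIdx k) * pd (jIdx i) F z * pd (jIdx j) G z
    + z (xIdx k) * pd (jIdx i) F z * pd (xIdx j) G z
    + z (xIdx k) * pd (xIdx i) F z * pd (jIdx j) G z )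

open Matrix Set Filter

def momentum (z : Fin 6 → ℝ) : Fin 3 → ℝ := fun k => z (jIdx k)
def position (z : Fin 6 → ℝ) : Fin 3 → ℝ := fun k => z (xIdx k)
noncomputable def gradJ (F : (Fin 6 → ℝ) → ℝ) (z : Fin 6 → ℝ) : Fin 3 → ℝ :=
  fun i => pd (jIdx i) F z
noncomputable def gradX (F : (Fin 6 → ℝ) → ℝ) (z : Fin 6 → ℝ) : Fin 3 → ℝ :=
  fun i => pd (xIdx i) F z

theorem e3Bracket_eq_cross (F G : (Fin 6 → ℝ) → ℝ) (z : Fin 6 → ℝ) :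
    e3Bracket F G z = momentum z ⬝ᵥ (gradJ F z ⨯₃ gradJ G z)
      + position z ⬝ᵥ (gradJ F z ⨯₃ gradX G z + gradX F z ⨯₃ gradJ G z) := by
  simp [e3Bracket, eps, cross_apply, dotProduct, Fin.sum_univ_three, momentum, position,
    gradJ, gradX]
  ring

def quadraticHamiltonian (Φ m g : ℝ → ℝ) (z : Fin 6 → ℝ) : ℝ :=
  (z (jIdx 0))^2 + (z (jIdx 1))^2 + Φ (z (xIdx 2)) * (z (jIdx 2))^2
    + m (z (xIdx 2)) * z (xIdx 0) + g (z (xIdx 2))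

def cubicIntegral (α : ℝ) (f g n ℓ : ℝ → ℝ) (z : Fin 6 → ℝ) : ℝ :=
  -2*α*(z (jIdx 2)) *
      (-(α^2)*(z (jIdx 2))^2 + (z (jIdx 0))^2 + (z (jIdx 1))^2
        + f (z (xIdx 2)) * (z (jIdx 2))^2 + g (z (xIdx 2)))
    - n (z (xIdx 2)) * z (jIdx 0)
    - ℓ (z (xIdx 2)) * z (xIdx 0) * z (jIdx 2)

section Gradients

variable {z : Fin 6 → ℝ}

theorem grad_quadraticHamiltonian {Φ m g : ℝ → ℝ} {Φ' m' g' : ℝ}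
    (hΦ : HasDerivAt Φ Φ' (z (xIdx 2))) (hm : HasDerivAt m m' (z (xIdx 2)))
    (hg : HasDerivAt g g' (z (xIdx 2))) :
    gradJ (quadraticHamiltonian Φ m g) z
        = ![2 * z (jIdx 0), 2 * z (jIdx 1), 2 * Φ (z (xIdx 2)) * z (jIdx 2)] ∧
      gradX (quadraticHamiltonian Φ m g) z
        = ![m (z (xIdx 2)), 0, Φ' * (z (jIdx 2))^2 + m' * z (xIdx 0) + g'] := by
  have hx i := hasFDerivAt_apply (𝕜 := ℝ) i z
  have hsq i := (hx i).pow 2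
  have hfd : HasFDerivAt (quadraticHamiltonian Φ m g) _ z :=
    ((((hsq (jIdx 0)).add (hsq (jIdx 1))).add
      ((hΦ.comp_hasFDerivAt z (hx _)).mul (hsq (jIdx 2)))).add
      ((hm.comp_hasFDerivAt z (hx _)).mul (hx (xIdx 0)))).add (hg.comp_hasFDerivAt z (hx _))
  refine ⟨funext fun i => ?_, funext fun i => ?_⟩ <;> fin_cases i <;>
    simp [gradJ, gradX, pd, hfd.fderiv, xIdx, jIdx] <;> ring

theorem grad_cubicIntegral (α : ℝ) {f g n ℓ : ℝ → ℝ} {f' g' n' ℓ' : ℝ}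
    (hf : HasDerivAt f f' (z (xIdx 2))) (hg : HasDerivAt g g' (z (xIdx 2)))
    (hn : HasDerivAt n n' (z (xIdx 2))) (hℓ : HasDerivAt ℓ ℓ' (z (xIdx 2))) :
    gradJ (cubicIntegral α f g n ℓ) z
        = ![-4*α * z (jIdx 2) * z (jIdx 0) - n (z (xIdx 2)), -4*α * z (jIdx 2) * z (jIdx 1),
            -2*α * (-3*α^2 * (z (jIdx 2))^2 + (z (jIdx 0))^2 + (z (jIdx 1))^2
              + 3 * f (z (xIdx 2)) * (z (jIdx 2))^2 + g (z (xIdx 2)))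
              - ℓ (z (xIdx 2)) * z (xIdx 0)] ∧
      gradX (cubicIntegral α f g n ℓ) z
        = ![-ℓ (z (xIdx 2)) * z (jIdx 2), 0,
            -2*α * z (jIdx 2) * (f' * (z (jIdx 2))^2 + g') - n' * z (jIdx 0)
              - ℓ' * z (xIdx 0) * z (jIdx 2)] := by
  have hx i := hasFDerivAt_apply (𝕜 := ℝ) i z
  have hsq i := (hx i).pow 2
  have hfactor := ((((hsq (jIdx 2)).const_mul (-(α^2))).add (hsq (jIdx 0))).add (hsq (jIdx 1))
    |>.add ((hf.comp_hasFDerivAt z (hx _)).mul (hsq (jIdx 2)))).add (hg.comp_hasFDerivAt z (hx _))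
  have hfd : HasFDerivAt (cubicIntegral α f g n ℓ) _ z :=
    ((((hx (jIdx 2)).const_mul (-2*α)).mul hfactor).sub
      ((hn.comp_hasFDerivAt z (hx _)).mul (hx (jIdx 0)))).sub
      (((hℓ.comp_hasFDerivAt z (hx _)).mul (hx (xIdx 0))).mul (hx (jIdx 2)))
  refine ⟨funext fun i => ?_, funext fun i => ?_⟩ <;> fin_cases i <;>
    simp [gradJ, gradX, pd, hfd.fderiv, xIdx, jIdx] <;> ring

end Gradients

theorem hasDerivAt_sqrt_add (e : ℝ) {t : ℝ} (ht : 0 < t + e) :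
    HasDerivAt (fun s => √(s + e)) (1 / (2 * √(t + e))) t := by
  simpa using ((hasDerivAt_id t).add_const e).sqrt ht.ne'

theorem hasDerivAt_div_sqrt_add (k e : ℝ) {t : ℝ} (ht : 0 < t + e) :
    HasDerivAt (fun s => k / √(s + e)) (-k / (2 * √(t + e) ^ 3)) t := by
  have hpos : 0 < √(t + e) := Real.sqrt_pos.mpr ht
  refine ((hasDerivAt_const t k).div (hasDerivAt_sqrt_add e ht) hpos.ne').congr_deriv ?_
  field_simp
  ring

theorem HasDerivAt.congr_of_eqOn_Ioi {φ ψ : ℝ → ℝ} {b t ψ' : ℝ} (hψ : HasDerivAt ψ ψ' t)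
    (h : EqOn φ ψ (Ioi b)) (ht : b < t) : HasDerivAt φ ψ' t :=
  hψ.congr_of_eventuallyEq (eventuallyEq_of_mem (Ioi_mem_nhds ht) h)

theorem hasDerivAt_mul_sqrt_add (c e : ℝ) {t : ℝ} (ht : 0 < t + e) :
    HasDerivAt (fun s => c * √(s + e)) ((c / 2) / √(t + e)) t :=
  ((hasDerivAt_sqrt_add e ht).const_mul c).congr_deriv (by ring)

theorem hasDerivAt_div_add (k e : ℝ) {t : ℝ} (ht : t + e ≠ 0) :
    HasDerivAt (fun s => k / (s + e)) (-k / (t + e)^2) t := by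
  refine ((hasDerivAt_const t k).div ((hasDerivAt_id t).add_const e) ht).congr_deriv ?_
  simp only [id]
  ring

namespace DullinMatveev

noncomputable def j3sqCoeff (a e t : ℝ) : ℝ := 1 + t / (t + e) - (t^2 - a^2) / (4 * (t + e)^2)

theorem hasDerivAt_j3sqCoeff (a e : ℝ) {t : ℝ} (ht : t + e ≠ 0) :
    HasDerivAt (j3sqCoeff a e)
      (e / (t + e)^2 - t / (2 * (t + e)^2) + (t^2 - a^2) / (2 * (t + e)^3)) t := by
  have hu : HasDerivAt (fun s => s + e) 1 t := (hasDerivAt_id t).add_const e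
  have hquot := (hasDerivAt_id t).div hu ht
  have hquot2 := ((hasDerivAt_pow 2 t).sub_const (a^2)).div ((hu.pow 2).const_mul 4)
    (by positivity : 4 * (t + e)^2 ≠ 0)
  refine (((hasDerivAt_const t 1).add hquot).sub hquot2).congr_deriv ?_
  simp only [Pi.pow_apply, id]
  field_simp
  ring

variable {a c d e : ℝ} {n m ℓ g f : ℝ → ℝ} (hn : n = fun t => c * √(t + e))
include hn

theorem deriv_n_eqOn : EqOn (deriv n) (fun t => (c / 2) / √(t + e)) (Ioi (-e)) := fun _ ht => by
  subst hn
  exact (hasDerivAt_mul_sqrt_add c e (neg_lt_iff_pos_add.mp ht)).deriv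

theorem deriv_deriv_n_eqOn :
    EqOn (deriv (deriv n)) (fun t => -(c / 2) / (2 * √(t + e) ^ 3)) (Ioi (-e)) := fun _ ht =>
  ((hasDerivAt_div_sqrt_add (c / 2) e (neg_lt_iff_pos_add.mp ht)).congr_of_eqOn_Ioi
    (deriv_n_eqOn hn) ht).deriv

theorem m_eqOn (hm : m = fun t => -(deriv n t) / (1/2)) :
    EqOn m (fun t => -c / √(t + e)) (Ioi (-e)) := fun _ ht => by
  simp only [hm, deriv_n_eqOn hn ht]
  ring

theorem ℓ_eqOn (hc : c ≠ 0) (hℓ : ℓ = fun t => n t * deriv (deriv n) t / deriv n t) :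
    EqOn ℓ (fun t => -(c / 2) / √(t + e)) (Ioi (-e)) := fun t ht => by
  have hs : 0 < √(t + e) := Real.sqrt_pos.mpr (neg_lt_iff_pos_add.mp ht)
  simp only [hℓ]
  rw [deriv_deriv_n_eqOn hn ht, deriv_n_eqOn hn ht, hn]
  field_simp

theorem g_eqOn (hg : g = fun t => d / (n t)^2) :
    EqOn g (fun t => (d / c^2) / (t + e)) (Ioi (-e)) := fun t ht => by
  simp only [hg, hn, mul_pow, Real.sq_sqrt (neg_lt_iff_pos_add.mp ht).le, div_div]

theorem f_eqOn (hc : c ≠ 0) (hm : m = fun t => -(deriv n t) / (1/2))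
    (hℓ : ℓ = fun t => n t * deriv (deriv n) t / deriv n t)
    (hf : f = fun t => 1 - 3*(1/2)^2
        - (1/2) * (3*t*(m t) - 2*(a^2 - t^2)*(deriv m t)) / n t
        + (t*(ℓ t) - (a^2 - t^2)*(deriv ℓ t)) / n t) :
    EqOn f (fun t => j3sqCoeff a e t - 3/4) (Ioi (-e)) := fun t ht => by
  have hte : 0 < t + e := neg_lt_iff_pos_add.mp ht
  have hm' := ((hasDerivAt_div_sqrt_add (-c) e hte).congr_of_eqOn_Ioi (m_eqOn hn hm) ht).deriv
  have hℓ' := ((hasDerivAt_div_sqrt_add (-(c / 2)) e hte).congr_of_eqOn_Ioi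
    (ℓ_eqOn hn hc hℓ) ht).deriv
  simp only [hf]
  rw [hm', hℓ', m_eqOn hn hm ht, ℓ_eqOn hn hc hℓ ht, hn]
  have hs : 0 < √(t + e) := Real.sqrt_pos.mpr hte
  have hs2 := Real.sq_sqrt hte.le
  set s := √(t + e)
  rw [j3sqCoeff, ← hs2]
  field_simp
  ring

theorem e3Bracket_eq_casimir_combination (hc : c ≠ 0) (hm : m = fun t => -(deriv n t) / (1/2))
    (hℓ : ℓ = fun t => n t * deriv (deriv n) t / deriv n t) (hg : g = fun t => d / (n t)^2)
    (hf : f = fun t => 1 - 3*(1/2)^2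
        - (1/2) * (3*t*(m t) - 2*(a^2 - t^2)*(deriv m t)) / n t
        + (t*(ℓ t) - (a^2 - t^2)*(deriv ℓ t)) / n t)
    {z : Fin 6 → ℝ} (hz : -e < z (xIdx 2)) :
    e3Bracket (quadraticHamiltonian (j3sqCoeff a e) m g) (cubicIntegral (1/2) f g n ℓ) z
      = -(c * (2 * (z (xIdx 2) + e) * z (jIdx 1) + z (xIdx 1) * z (jIdx 2)))
            / (2 * √(z (xIdx 2) + e) ^ 3) * (position z ⬝ᵥ momentum z)
        + c * z (jIdx 1) * z (jIdx 2) / (2 * √(z (xIdx 2) + e) ^ 3)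
            * (position z ⬝ᵥ position z - a^2) := by
  have hte : 0 < z (xIdx 2) + e := neg_lt_iff_pos_add.mp hz
  have hm' := (hasDerivAt_div_sqrt_add (-c) e hte).congr_of_eqOn_Ioi (m_eqOn hn hm) hz
  have hg' := (hasDerivAt_div_add (d / c^2) e hte.ne').congr_of_eqOn_Ioi (g_eqOn hn hg) hz
  have hf' := ((hasDerivAt_j3sqCoeff a e hte.ne').sub_const (3/4)).congr_of_eqOn_Ioi
    (f_eqOn hn hc hm hℓ hf) hz
  have hn' := hn ▸ hasDerivAt_mul_sqrt_add c e hte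
  have hℓ' := (hasDerivAt_div_sqrt_add (-(c / 2)) e hte).congr_of_eqOn_Ioi (ℓ_eqOn hn hc hℓ) hz
  obtain ⟨hHJ, hHX⟩ := grad_quadraticHamiltonian (hasDerivAt_j3sqCoeff a e hte.ne') hm' hg'
  obtain ⟨hKJ, hKX⟩ := grad_cubicIntegral (1/2) hf' hg' hn' hℓ'
  rw [e3Bracket_eq_cross, hHJ, hHX, hKJ, hKX, m_eqOn hn hm hz, g_eqOn hn hg hz,
    f_eqOn hn hc hm hℓ hf hz, ℓ_eqOn hn hc hℓ hz, hn]
  simp only [cross_apply, dotProduct, Fin.sum_univ_three, momentum, position, j3sqCoeff,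
    cons_val_zero, cons_val_one, cons_val_two, head_cons, tail_cons, Pi.add_apply]
  have hr := Real.sqrt_pos.mpr hte
  have hr2 := Real.sq_sqrt hte.le
  generalize √(z (xIdx 2) + e) = r at hr hr2 ⊢
  obtain rfl : e = r^2 - z (xIdx 2) := by linarith
  simp only [add_sub_cancel]
  field_simp
  ring

end DullinMatveev

open DullinMatveev

/-- Here `m x₁ + g` is the paper's `c x₁/(x₃+e)^{1/2} + d/(x₃+e)` after the rescaling `c → −c`,
`d → d/c²`. -/
theorem dullin_matveev_commute (a c d e : ℝ) (hc : c ≠ 0) (α : ℝ) (hα : α = 1/2)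
    (n m ℓ g f : ℝ → ℝ)
    (hn : n = fun t => c * (t + e) ^ ((1:ℝ)/2))
    (hg : g = fun t => d / (n t)^2)
    (hm : m = fun t => -(deriv n t) / α)
    (hℓ : ℓ = fun t => n t * (deriv (deriv n) t) / deriv n t)
    (hf : f = fun t => 1 - 3*α^2
        - α * (3*t*(m t) - 2*(a^2 - t^2)*(deriv m t)) / n t
        + (t*(ℓ t) - (a^2 - t^2)*(deriv ℓ t)) / n t)
    (H K : (Fin 6 → ℝ) → ℝ)
    (hH : H = fun z => (z (jIdx 0))^2 + (z (jIdx 1))^2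
        + (1 + z (xIdx 2) / (z (xIdx 2) + e)
            - ((z (xIdx 2))^2 - a^2) / (4*(z (xIdx 2) + e)^2)) * (z (jIdx 2))^2
        + m (z (xIdx 2)) * z (xIdx 0) + g (z (xIdx 2)))
    (hK : K = fun z => -2*α*(z (jIdx 2)) *
          (-(α^2)*(z (jIdx 2))^2 + (z (jIdx 0))^2 + (z (jIdx 1))^2
            + f (z (xIdx 2)) * (z (jIdx 2))^2 + g (z (xIdx 2)))
        - n (z (xIdx 2)) * z (jIdx 0)
        - ℓ (z (xIdx 2)) * z (xIdx 0) * z (jIdx 2)) :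
    ∀ z : Fin 6 → ℝ, -e < z (xIdx 2) →
      (z (xIdx 0))^2 + (z (xIdx 1))^2 + (z (xIdx 2))^2 = a^2 →
      z (xIdx 0) * z (jIdx 0) + z (xIdx 1) * z (jIdx 1) + z (xIdx 2) * z (jIdx 2) = 0 →
      e3Bracket H K z = 0 := by
  subst hα hH hK
  intro z hz hsphere horth
  have hxJ : position z ⬝ᵥ momentum z = 0 := by
    simpa [dotProduct, Fin.sum_univ_three, position, momentum] using horth
  have hxx : position z ⬝ᵥ position z = a^2 := by
    simpa [dotProduct, Fin.sum_univ_three, position, sq] using hsphere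
  have hn' : n = fun t => c * √(t + e) := by simp_rw [hn, Real.sqrt_eq_rpow]
  refine (e3Bracket_eq_casimir_combination hn' hc hm hℓ hg hf hz).trans ?_
  rw [hxJ, hxx]
  ring
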